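/- Let (Y_n) be a Galton–Watson process with offspring distribution θ (whose generating function is g_θ) started from p individuals. Then for every r ≥ 1, P_p(Y_r = 1) = (64/3) · p · (3+2r)/(((3+2r)^2-1)^2) · (1 - 8/((3+2r)^2-1))^{p-1}. -/

import Mathlib

open MeasureTheory

noncomputable def gθ : ℝ → ℝ :=
  fun y => 1 - 8 / ((Real.sqrt ((9 - y) / (1 - y)) + 2) ^ 2 - 1)

lemma gθ_step {u : ℝ} (hu : 3 ≤ u) :
    gθ (1 - 8 / (u ^ 2 - 1)) = 1 - 8 / ((u + 2) ^ 2 - 1) := by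
  have hu0 : (0:ℝ) < u := by linarith
  have h1 : u ^ 2 - 1 ≠ 0 := by nlinarith
  have hkey : (9 - (1 - 8 / (u ^ 2 - 1))) / (1 - (1 - 8 / (u ^ 2 - 1))) = u ^ 2 := by
    field_simp
    ring
  unfold gθ
  rw [hkey, Real.sqrt_sq hu0.le]

lemma sqrt_ge_three {y : ℝ} (hy : y ∈ Set.Ico (0:ℝ) 1) :
    3 ≤ Real.sqrt ((9 - y) / (1 - y)) := by
  obtain ⟨h0, h1⟩ := hy
  have h1' : (0:ℝ) < 1 - y := by linarith
  have : (9:ℝ) ≤ (9 - y) / (1 - y) := by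
    rw [le_div_iff₀ h1']
    linarith
  calc (3:ℝ) = Real.sqrt 9 := by
        rw [show (9:ℝ) = 3^2 by norm_num, Real.sqrt_sq (by norm_num)]
    _ ≤ _ := Real.sqrt_le_sqrt this

lemma gθ_iter (r : ℕ) {y : ℝ} (hy : y ∈ Set.Ico (0:ℝ) 1) :
    gθ^[r] y = 1 - 8 / ((Real.sqrt ((9 - y) / (1 - y)) + 2 * r) ^ 2 - 1) := by
  set u := Real.sqrt ((9 - y) / (1 - y)) with hu
  have hu3 : 3 ≤ u := sqrt_ge_three hy
  induction r with
  | zero =>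
    simp only [Function.iterate_zero, id_eq, Nat.cast_zero, mul_zero, add_zero]
    have h1' : (0:ℝ) < 1 - y := by linarith [hy.2]
    have husq : u ^ 2 = (9 - y) / (1 - y) :=
      Real.sq_sqrt (div_nonneg (by linarith [hy.1]) h1'.le)
    rw [husq]
    field_simp
    ring
  | succ n ih =>
    rw [Function.iterate_succ_apply', ih]
    have hn : (0:ℝ) ≤ (n:ℝ) := Nat.cast_nonneg n
    rw [gθ_step (by push_cast; linarith)]
    push_cast
    ring_nf

lemma sqrt9 : Real.sqrt ((9 - (0:ℝ)) / (1 - 0)) = 3 := by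
  rw [show ((9:ℝ) - 0) / (1 - 0) = 3 ^ 2 by norm_num, Real.sqrt_sq (by norm_num)]

lemma hasDeriv_G (r : ℕ) (p : ℕ) :
    HasDerivAt (fun y : ℝ => (1 - 8 / ((Real.sqrt ((9 - y) / (1 - y)) + 2 * (r:ℝ)) ^ 2 - 1)) ^ p)
      ((64 / 3) * (p : ℝ) * (3 + 2 * (r : ℝ)) / (((3 + 2 * (r : ℝ)) ^ 2 - 1) ^ 2)
        * (1 - 8 / ((3 + 2 * (r : ℝ)) ^ 2 - 1)) ^ (p - 1)) 0 := by
  have hr0 : (0:ℝ) ≤ (r:ℝ) := Nat.cast_nonneg r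
  have h1 : HasDerivAt (fun y : ℝ => (9 - y) / (1 - y)) 8 0 := by
    have ha : HasDerivAt (fun y : ℝ => 9 - y) (-1) 0 := by
      exact (hasDerivAt_id (0:ℝ)).const_sub (9:ℝ)
    have hb : HasDerivAt (fun y : ℝ => 1 - y) (-1) 0 := by
      exact (hasDerivAt_id (0:ℝ)).const_sub (1:ℝ)
    have := ha.div hb (by norm_num)
    exact this.congr_deriv (by norm_num)
  have h2 : HasDerivAt (fun y : ℝ => Real.sqrt ((9 - y) / (1 - y))) (4/3) 0 := by
    have hs : HasDerivAt Real.sqrt (1 / (2 * Real.sqrt ((9 - (0:ℝ)) / (1 - 0)))) ((9 - (0:ℝ)) / (1 - 0)) :=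
      Real.hasDerivAt_sqrt (by norm_num)
    have := hs.comp 0 h1
    exact this.congr_deriv (by rw [sqrt9]; norm_num)
  have h3 : HasDerivAt (fun y : ℝ => (Real.sqrt ((9 - y) / (1 - y)) + 2 * (r:ℝ)) ^ 2 - 1)
      (2 * (3 + 2 * (r:ℝ)) * (4/3)) 0 := by
    have := ((h2.add_const (2 * (r:ℝ))).pow 2).sub_const 1
    exact this.congr_deriv (by rw [sqrt9]; push_cast; ring)
  have hden : ((3 + 2 * (r:ℝ)) ^ 2 - 1) ≠ 0 := by nlinarith
  have hden0 : ((fun y : ℝ => (Real.sqrt ((9 - y) / (1 - y)) + 2 * (r:ℝ)) ^ 2 - 1) 0) ≠ 0 := by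
    simp only [sqrt9]; exact hden
  have h4 : HasDerivAt (fun y : ℝ => 1 - 8 / ((Real.sqrt ((9 - y) / (1 - y)) + 2 * (r:ℝ)) ^ 2 - 1))
      (8 * (2 * (3 + 2 * (r:ℝ)) * (4/3)) / ((3 + 2 * (r:ℝ)) ^ 2 - 1) ^ 2) 0 := by
    have := ((hasDerivAt_const (0:ℝ) (8:ℝ)).div h3 hden0).const_sub 1
    exact this.congr_deriv (by simp only [sqrt9]; ring)
  have h5 := h4.pow p
  exact h5.congr_deriv (by simp only [sqrt9]; ring)

theorem GW_prob_eq_one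
    {Ω : Type*} [MeasurableSpace Ω] (μ : Measure Ω) [IsProbabilityMeasure μ]
    (Y : ℕ → Ω → ℕ) (hY : ∀ n, Measurable (Y n)) (p : ℕ) (hp : 1 ≤ p)
    (hgen : ∀ r : ℕ, ∀ y ∈ Set.Ico (0 : ℝ) 1,
      ∫ ω, (y ^ (Y r ω) : ℝ) ∂μ = (gθ^[r] y) ^ p)
    (r : ℕ) (hr : 1 ≤ r) :
    (μ {ω | Y r ω = 1}).toReal
      = (64 / 3) * (p : ℝ) * (3 + 2 * (r : ℝ)) / (((3 + 2 * (r : ℝ)) ^ 2 - 1) ^ 2)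
        * (1 - 8 / ((3 + 2 * (r : ℝ)) ^ 2 - 1)) ^ (p - 1) := by
  set Φ : ℝ → ℝ :=
    fun y => (1 - 8 / ((Real.sqrt ((9 - y) / (1 - y)) + 2 * (r:ℝ)) ^ 2 - 1)) ^ p with hΦdef
  set D : ℝ := (64 / 3) * (p : ℝ) * (3 + 2 * (r : ℝ)) / (((3 + 2 * (r : ℝ)) ^ 2 - 1) ^ 2)
        * (1 - 8 / ((3 + 2 * (r : ℝ)) ^ 2 - 1)) ^ (p - 1) with hDdef
  have hΦderiv : HasDerivAt Φ D 0 := hasDeriv_G r p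
  set c : ℝ := (μ {ω | Y r ω = 1}).toReal with hcdef
  -- the generating function equals Φ on [0,1)
  have hΦeq : ∀ y ∈ Set.Ico (0:ℝ) 1, ∫ ω, (y ^ (Y r ω) : ℝ) ∂μ = Φ y := by
    intro y hy
    rw [hgen r y hy, gθ_iter r hy]
  -- measurability and integrability facts
  have hA1 : MeasurableSet {ω | Y r ω = 1} := hY r (measurableSet_singleton 1)
  have hint : ∀ z : ℝ, z ∈ Set.Icc (0:ℝ) 1 → Integrable (fun ω => z ^ Y r ω) μ := by
    intro z hz
    have hm : Measurable (fun ω => z ^ Y r ω) := measurable_const.pow (hY r)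
    refine Integrable.mono' (integrable_const 1) hm.aestronglyMeasurable (ae_of_all μ fun ω => ?_)
    rw [Real.norm_eq_abs, abs_pow, abs_of_nonneg hz.1]
    exact pow_le_one₀ hz.1 hz.2
  have hIind : ∫ ω, ({ω | Y r ω = 1}.indicator (fun _ => (1:ℝ)) ω) ∂μ = c := by
    rw [integral_indicator_const _ hA1]; simp [hcdef]; rfl
  have hindint : Integrable ({ω | Y r ω = 1}.indicator (fun _ => (1:ℝ))) μ := by
    refine (integrable_const (1:ℝ)).indicator hA1
  -- key slope bound
  have hkey : ∀ y ∈ Set.Ioo (0:ℝ) 1, |(Φ y - Φ 0) / y - c| ≤ y := by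
    intro y hy
    obtain ⟨hy0, hy1⟩ := hy
    have hf1 := hint y ⟨hy0.le, hy1.le⟩
    have hf0 := hint 0 ⟨le_refl _, zero_le_one⟩
    set h : Ω → ℝ := fun ω =>
      y ^ Y r ω - (0:ℝ) ^ Y r ω - y * ({ω | Y r ω = 1}.indicator (fun _ => (1:ℝ)) ω) with hhdef
    have hsub : Integrable (fun ω => y ^ Y r ω - (0:ℝ) ^ Y r ω) μ := hf1.sub hf0
    have hmul : Integrable (fun ω => y * ({ω | Y r ω = 1}.indicator (fun _ => (1:ℝ)) ω)) μ :=
      hindint.const_mul y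
    have hhint : Integrable h μ := hsub.sub hmul
    have haux : ∀ n : ℕ, (0 ≤ y ^ n - (0:ℝ) ^ n - y * (if n = 1 then 1 else 0)) ∧
        (y ^ n - (0:ℝ) ^ n - y * (if n = 1 then 1 else 0)) ≤ y ^ 2 := by
      intro n
      rcases n with _ | _ | m
      · norm_num
        positivity
      · norm_num
        positivity
      · have hn2 : 2 ≤ m + 2 := by omega
        rw [if_neg (by omega : ¬ m + 2 = 1), zero_pow (by omega : m + 2 ≠ 0)]
        constructor
        · have : (0:ℝ) ≤ y ^ (m + 2) := by positivity
          linarith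
        · have : y ^ (m + 2) ≤ y ^ 2 := pow_le_pow_of_le_one hy0.le hy1.le hn2
          linarith
    have hbound : ∀ ω, 0 ≤ h ω ∧ h ω ≤ y ^ 2 := by
      intro ω
      simp only [hhdef, Set.indicator_apply, Set.mem_setOf_eq]
      exact haux (Y r ω)
    have hIh : ∫ ω, h ω ∂μ = Φ y - Φ 0 - y * c := by
      rw [hhdef]
      rw [integral_sub hsub hmul, integral_sub hf1 hf0,
        integral_const_mul, hIind, hΦeq y ⟨hy0.le, hy1⟩, hΦeq 0 ⟨le_refl _, zero_lt_one⟩]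
    have hIh0 : 0 ≤ ∫ ω, h ω ∂μ := integral_nonneg fun ω => (hbound ω).1
    have hIh2 : ∫ ω, h ω ∂μ ≤ y ^ 2 := by
      calc ∫ ω, h ω ∂μ ≤ ∫ _, y ^ 2 ∂μ :=
            integral_mono hhint (integrable_const _) fun ω => (hbound ω).2
        _ = y ^ 2 := by simp
    have hslope : (Φ y - Φ 0) / y - c = (∫ ω, h ω ∂μ) / y := by
      rw [hIh]; field_simp
    rw [hslope, abs_of_nonneg (div_nonneg hIh0 hy0.le), div_le_iff₀ hy0]
    nlinarith
  -- the filter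
  haveI hNB : (nhdsWithin (0:ℝ) (Set.Ioo 0 1)).NeBot := by
    rw [← mem_closure_iff_nhdsWithin_neBot, closure_Ioo (by norm_num : (0:ℝ) ≠ 1)]
    exact ⟨le_refl 0, zero_le_one⟩
  -- slope tends to c
  have htc : Filter.Tendsto (fun y => (Φ y - Φ 0) / y) (nhdsWithin (0:ℝ) (Set.Ioo 0 1)) (nhds c) := by
    have h0 : Filter.Tendsto (fun y => (Φ y - Φ 0) / y - c)
        (nhdsWithin (0:ℝ) (Set.Ioo 0 1)) (nhds 0) := by
      refine squeeze_zero_norm' (a := fun y => y) ?_ ?_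
      · filter_upwards [self_mem_nhdsWithin] with y hy
        simpa using hkey y hy
      · exact (continuous_id.tendsto 0).mono_left nhdsWithin_le_nhds
    have := h0.add (tendsto_const_nhds (x := c))
    simpa using this
  -- slope tends to D
  have htD : Filter.Tendsto (fun y => (Φ y - Φ 0) / y) (nhdsWithin (0:ℝ) (Set.Ioo 0 1)) (nhds D) := by
    have hs := hasDerivAt_iff_tendsto_slope.mp hΦderiv
    have hmono : nhdsWithin (0:ℝ) (Set.Ioo 0 1) ≤ nhdsWithin (0:ℝ) {(0:ℝ)}ᶜ :=
      nhdsWithin_mono 0 (fun x hx => ne_of_gt hx.1)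
    have := hs.mono_left hmono
    refine this.congr' ?_
    filter_upwards [self_mem_nhdsWithin] with y hy
    rw [slope_def_field, sub_zero]
  exact tendsto_nhds_unique htc htD
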